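/- Low rank approximation: Let A be a compact Hausdorff second-countable abelian group with normalized Haar probability measure μ, let k ≥ 1, let ε > 0, and let F = (f_v)_{v ∈ K_k} be a system of Borel measurable functions on A with ‖f_v‖_∞ ≤ 1 for all v. Then there exist a natural number n ≤ 1 + 4/ε² and rank one functions r₁,…,r_n on A^{k+1} such that the function g = (1/n)·∑_{i=1}^n r_i satisfies ‖g − [F]∘ψ₀‖_{L²(μ^{k+1})} ≤ ε, where ψ₀ : A^{k+1} → A is the projection (x,t₁,…,t_k) ↦ x. -/

import Mathlib

open MeasureTheory
open scoped BigOperators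

/-- The `⋆` operation: conjugate a complex number iff the natural number parameter is odd. -/
noncomputable def cstar (m : ℕ) (z : ℂ) : ℂ := if Even m then z else (starRingEnd ℂ) z

/-- The height `h(v)` of a cube vertex `v ∈ {0,1}^k`: the number of `1` coordinates. -/
def ht {k : ℕ} (v : Fin k → Bool) : ℕ := (Finset.univ.filter (fun i => v i = true)).card

/-- The point `x + v₁t₁ + ⋯ + v_k t_k` of the cube with base `x` and edges `t`. -/
def vertexPoint {A : Type*} [AddCommGroup A] {k : ℕ} (x : A) (t : Fin k → A)
    (v : Fin k → Bool) : A := x + ∑ i, if v i then t i else 0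

/-- The Gowers integral
`G_k(f) = ∫_{A^{k+1}} ∏_{v ∈ {0,1}^k} C^{h(v)} f(x + v₁t₁ + ⋯ + v_k t_k) dμ(x)dμ(t₁)⋯dμ(t_k)`,
so that `‖f‖_{U_k}^{2^k} = G_k(f)`. -/
noncomputable def gowersIntegral {A : Type*} [AddCommGroup A] [MeasurableSpace A]
    (μ : Measure A) (k : ℕ) (f : A → ℂ) : ℂ :=
  ∫ x, ∫ t : Fin k → A, ∏ v : Fin k → Bool, cstar (ht v) (f (vertexPoint x t v))
    ∂(Measure.pi fun _ => μ) ∂μ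


/-- The corner convolution `[F]` of a system `F = (f_v)_{v ∈ K_n}` of functions on `A`. -/
noncomputable def cornerConv {A : Type*} [AddCommGroup A] [MeasurableSpace A]
    (μ : Measure A) (n : ℕ) (F : (Fin n → Bool) → A → ℂ) (x : A) : ℂ :=
  ∫ t : Fin n → A,
    ∏ v ∈ Finset.univ.filter (fun v : Fin n → Bool => v ≠ fun _ => false),
      cstar (ht v) (F v (vertexPoint x t v))
    ∂(Measure.pi fun _ => μ)

/-- The rank one function on `A^{k+1} = A × A^k` associated with a system
`(g_v)_{v ∈ K_k}` of functions on `A`: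
`(x,t₁,…,t_k) ↦ ∏_{v ∈ K_k} C^{h(v)} g_v(x + v₁t₁ + ⋯ + v_k t_k)`. -/
noncomputable def rankOne {A : Type*} [AddCommGroup A] {k : ℕ}
    (G : (Fin k → Bool) → A → ℂ) (p : A × (Fin k → A)) : ℂ :=
  ∏ v ∈ Finset.univ.filter (fun v : Fin k → Bool => v ≠ fun _ => false),
    cstar (ht v) (G v (vertexPoint p.1 p.2 v))

/-!
Maurey's empirical method. Translation invariance of `μ^k` gives
`[F](x) = ∫ r_s(x, t) dμ^k(s)` with `r_s(x, t) = rankOne F (x, t + s)`, and each `r_s` is itself a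
rank one function, namely that of the system `v ↦ f_v(· + v₁s₁ + ⋯ + v_k s_k)`. Sampling
`s₁, …, s_n` one at a time, the deviations `r_{s_i} - [F]∘ψ₀` have mean zero, so each new sample
adds on average at most `sup ‖r_s - [F]∘ψ₀‖² ≤ 4` to the squared `L²` norm of their sum; some
choice therefore brings the average within `2/√n` of `[F]∘ψ₀`, and `n = ⌈4/ε²⌉` suffices.
-/

open MeasureTheory Function

theorem eLpNorm_two_le_ofReal {α E : Type*} [MeasurableSpace α] [NormedAddCommGroup E]
    {μ : Measure α} {f : α → E} (hf : MemLp f 2 μ) {r : ℝ} (hr : 0 ≤ r)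
    (h : ∫ x, ‖f x‖ ^ 2 ∂μ ≤ r ^ 2) : eLpNorm f 2 μ ≤ ENNReal.ofReal r := by
  rw [hf.eLpNorm_eq_integral_rpow_norm two_ne_zero ENNReal.ofNat_ne_top]
  gcongr
  rw [ENNReal.toReal_ofNat, Real.rpow_inv_le_iff_of_pos (by positivity) hr two_pos]
  simpa only [Real.rpow_two] using h

section Sampling

variable {S Ω H : Type*} [MeasurableSpace S] [MeasurableSpace Ω]
  [NormedAddCommGroup H] [InnerProductSpace ℝ H] [CompleteSpace H]
  {ν : Measure S} {P : Measure Ω} [IsProbabilityMeasure ν] [IsProbabilityMeasure P]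

theorem integral_norm_add_sq_le {e : S → H} {C : ℝ} (he : Integrable e ν) (hC : ∀ s, ‖e s‖ ≤ C)
    (h0 : ∫ s, e s ∂ν = 0) (d : H) : ∫ s, ‖d + e s‖ ^ 2 ∂ν ≤ ‖d‖ ^ 2 + C ^ 2 := by
  have hsq : Integrable (fun s => ‖e s‖ ^ 2) ν :=
    (MemLp.of_bound he.1 C (ae_of_all _ hC)).integrable_norm_pow two_ne_zero
  have hsqC : ∫ s, ‖e s‖ ^ 2 ∂ν ≤ C ^ 2 := by
    simpa using integral_mono hsq (integrable_const (C ^ 2))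
      fun s => pow_le_pow_left₀ (norm_nonneg _) (hC s) 2
  have hinner : Integrable (fun s => 2 * inner ℝ d (e s)) ν := (he.const_inner d).const_mul 2
  have hcross : ∫ s, 2 * inner ℝ d (e s) ∂ν = 0 := by
    rw [integral_const_mul, integral_inner he, h0, inner_zero_right, mul_zero]
  calc ∫ s, ‖d + e s‖ ^ 2 ∂ν = ∫ s, (‖d‖ ^ 2 + 2 * inner ℝ d (e s) + ‖e s‖ ^ 2) ∂ν := by
        simp_rw [norm_add_sq_real]
    _ = ‖d‖ ^ 2 + ∫ s, ‖e s‖ ^ 2 ∂ν := by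
        have hlin : Integrable (fun s => ‖d‖ ^ 2 + 2 * inner ℝ d (e s)) ν :=
          (integrable_const _).add hinner
        rw [integral_add hlin hsq, integral_add (integrable_const _) hinner, hcross,
          integral_const]
        simp
    _ ≤ ‖d‖ ^ 2 + C ^ 2 := by linarith

theorem exists_integral_norm_sum_sq_le {E : S → Ω → H} {C : ℝ}
    (hE : StronglyMeasurable (uncurry E)) (hC : ∀ s p, ‖E s p‖ ≤ C)
    (h0 : ∀ p, ∫ s, E s p ∂ν = 0) (n : ℕ) :
    ∃ s : Fin n → S, ∫ p, ‖∑ i, E (s i) p‖ ^ 2 ∂P ≤ n * C ^ 2 := by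
  induction n with
  | zero => exact ⟨Fin.elim0, by simp⟩
  | succ n ih =>
    obtain ⟨s, hs⟩ := ih
    set D : Ω → H := fun p => ∑ i, E (s i) p
    have hD : StronglyMeasurable D :=
      Finset.stronglyMeasurable_fun_sum _ fun i _ => hE.comp_measurable measurable_prodMk_left
    have hDC : ∀ p, ‖D p‖ ≤ n * C := fun p => by
      simpa using norm_sum_le_of_le Finset.univ fun i _ => hC (s i) p
    have hDsq : Integrable (fun p => ‖D p‖ ^ 2) P :=
      (MemLp.of_bound hD.aestronglyMeasurable _ (ae_of_all _ hDC)).integrable_norm_pow two_ne_zero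
    have hΦC : ∀ q : S × Ω, ‖D q.2 + E q.1 q.2‖ ≤ n * C + C := fun q =>
      (norm_add_le _ _).trans (add_le_add (hDC q.2) (hC q.1 q.2))
    have hΦ : Integrable (fun q : S × Ω => ‖D q.2 + E q.1 q.2‖ ^ 2) (ν.prod P) :=
      (MemLp.of_bound ((hD.comp_measurable measurable_snd).add hE).aestronglyMeasurable _
        (ae_of_all _ hΦC)).integrable_norm_pow two_ne_zero
    have hEint : ∀ p, Integrable (fun σ => E σ p) ν := fun p =>
      .of_bound (hE.comp_measurable measurable_prodMk_right).aestronglyMeasurable C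
        (ae_of_all _ (hC · p))
    have hmean : ∫ σ, ∫ p, ‖D p + E σ p‖ ^ 2 ∂P ∂ν ≤ (n + 1 : ℕ) * C ^ 2 := by
      rw [integral_integral_swap hΦ]
      calc ∫ p, ∫ σ, ‖D p + E σ p‖ ^ 2 ∂ν ∂P ≤ ∫ p, (‖D p‖ ^ 2 + C ^ 2) ∂P :=
            integral_mono hΦ.integral_prod_right (hDsq.add (integrable_const _)) fun p =>
              integral_norm_add_sq_le (hEint p) (hC · p) (h0 p) (D p)
        _ = ∫ p, ‖D p‖ ^ 2 ∂P + C ^ 2 := by rw [integral_add hDsq (integrable_const _)]; simp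
        _ ≤ (n + 1 : ℕ) * C ^ 2 := by push_cast; linarith
    obtain ⟨σ, hσ⟩ := exists_le_integral hΦ.integral_prod_left
    refine ⟨Fin.snoc s σ, ?_⟩
    simpa [Fin.sum_univ_castSucc, D] using hσ.trans hmean

theorem exists_eLpNorm_average_sub_integral_le {R : S → Ω → H} {C : ℝ}
    (hR : StronglyMeasurable (uncurry R)) (hC : ∀ s p, ‖R s p‖ ≤ C) {n : ℕ} (hn : n ≠ 0) :
    ∃ s : Fin n → S,
      eLpNorm (fun p => (n : ℝ)⁻¹ • ∑ i, R (s i) p - ∫ σ, R σ p ∂ν) 2 P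
        ≤ ENNReal.ofReal (2 * C / √n) := by
  have hC0 : 0 ≤ C := by
    obtain ⟨s⟩ := nonempty_of_isProbabilityMeasure ν
    obtain ⟨p⟩ := nonempty_of_isProbabilityMeasure P
    exact (norm_nonneg _).trans (hC s p)
  have hRint : ∀ p, Integrable (fun σ => R σ p) ν := fun p =>
    .of_bound (hR.comp_measurable measurable_prodMk_right).aestronglyMeasurable C
      (ae_of_all _ (hC · p))
  set m : Ω → H := fun p => ∫ σ, R σ p ∂ν
  have hm : StronglyMeasurable m := hR.integral_prod_left
  have hmC : ∀ p, ‖m p‖ ≤ C := fun p => by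
    simpa using norm_integral_le_of_norm_le_const (μ := ν) (ae_of_all _ (hC · p))
  have hE : StronglyMeasurable (uncurry fun σ p => R σ p - m p) :=
    hR.sub (hm.comp_measurable measurable_snd)
  have hEC : ∀ σ p, ‖R σ p - m p‖ ≤ 2 * C := fun σ p =>
    (norm_sub_le _ _).trans (by linarith [hC σ p, hmC p])
  have hE0 : ∀ p, ∫ σ, (R σ p - m p) ∂ν = 0 := fun p => by
    rw [integral_sub (hRint p) (integrable_const (m p)), integral_const]
    simp [m]
  obtain ⟨s, hs⟩ := exists_integral_norm_sum_sq_le (P := P) hE hEC hE0 n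
  have hn' : (0 : ℝ) < n := by positivity
  have hdev : (fun p => (n : ℝ)⁻¹ • ∑ i, R (s i) p - m p)
      = fun p => (n : ℝ)⁻¹ • ∑ i, (R (s i) p - m p) := by
    ext p
    rw [Finset.sum_sub_distrib, smul_sub, Finset.sum_const, Finset.card_univ, Fintype.card_fin,
      ← Nat.cast_smul_eq_nsmul ℝ, smul_smul, inv_mul_cancel₀ hn'.ne', one_smul]
  have hmem : MemLp (fun p => ∑ i, (R (s i) p - m p)) 2 P :=
    memLp_finsetSum _ fun i _ =>
      .of_bound (hE.comp_measurable measurable_prodMk_left).aestronglyMeasurable _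
        (ae_of_all _ (hEC (s i)))
  refine ⟨s, hdev ▸ eLpNorm_two_le_ofReal (hmem.const_smul _) (by positivity) ?_⟩
  calc ∫ p, ‖(n : ℝ)⁻¹ • ∑ i, (R (s i) p - m p)‖ ^ 2 ∂P
      = (n : ℝ)⁻¹ ^ 2 * ∫ p, ‖∑ i, (R (s i) p - m p)‖ ^ 2 ∂P := by
        simp_rw [norm_smul, mul_pow, integral_const_mul, norm_inv, RCLike.norm_natCast]
    _ ≤ (n : ℝ)⁻¹ ^ 2 * (n * (2 * C) ^ 2) := by gcongr
    _ = (2 * C / √n) ^ 2 := by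
        rw [div_pow, Real.sq_sqrt hn'.le]
        field_simp

end Sampling

section Cube

variable {A : Type*} [AddCommGroup A] {k : ℕ}

lemma norm_cstar (m : ℕ) (z : ℂ) : ‖cstar m z‖ = ‖z‖ := by
  unfold cstar; split <;> simp

lemma measurable_cstar (m : ℕ) : Measurable (cstar m) := by
  unfold cstar; split
  · exact measurable_id
  · exact Complex.continuous_conj.measurable

lemma norm_rankOne_le {G : (Fin k → Bool) → A → ℂ} (hG : ∀ v x, ‖G v x‖ ≤ 1)
    (p : A × (Fin k → A)) : ‖rankOne G p‖ ≤ 1 := by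
  rw [rankOne, norm_prod]
  exact Finset.prod_le_one (fun _ _ => norm_nonneg _) fun v _ => (norm_cstar _ _).trans_le (hG v _)

lemma vertexPoint_vertexPoint (x : A) (t s : Fin k → A) (v : Fin k → Bool) :
    vertexPoint (vertexPoint x t v) s v = vertexPoint x (t + s) v := by
  simp only [vertexPoint, add_assoc, ← Finset.sum_add_distrib, ite_add_ite, add_zero, Pi.add_apply]

def shiftSystem (F : (Fin k → Bool) → A → ℂ) (s : Fin k → A) : (Fin k → Bool) → A → ℂ :=
  fun v y => F v (vertexPoint y s v)

lemma rankOne_shiftSystem (F : (Fin k → Bool) → A → ℂ) (s : Fin k → A) (x : A) (t : Fin k → A) :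
    rankOne (shiftSystem F s) (x, t) = rankOne F (x, t + s) := by
  simp only [rankOne, shiftSystem, vertexPoint_vertexPoint]

variable [MeasurableSpace A] [MeasurableAdd₂ A]

lemma measurable_vertexPoint (v : Fin k → Bool) :
    Measurable fun p : A × (Fin k → A) => vertexPoint p.1 p.2 v := by
  refine measurable_fst.add (Finset.measurable_sum _ fun i _ => ?_)
  cases v i
  · exact measurable_const
  · exact (measurable_pi_apply i).comp measurable_snd

lemma measurable_rankOne {G : (Fin k → Bool) → A → ℂ} (hG : ∀ v, Measurable (G v)) :
    Measurable (rankOne G) :=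
  Finset.measurable_prod _ fun v _ =>
    (measurable_cstar _).comp ((hG v).comp (measurable_vertexPoint v))

lemma measurable_shiftSystem {F : (Fin k → Bool) → A → ℂ} (hF : ∀ v, Measurable (F v))
    (s : Fin k → A) (v : Fin k → Bool) : Measurable (shiftSystem F s v) :=
  (hF v).comp ((measurable_vertexPoint v).comp (measurable_id.prodMk measurable_const))

lemma integral_rankOne_add (μ : Measure A) [SigmaFinite μ] [μ.IsAddLeftInvariant]
    (F : (Fin k → Bool) → A → ℂ) (x : A) (t : Fin k → A) :
    ∫ s, rankOne F (x, t + s) ∂(Measure.pi fun _ => μ) = cornerConv μ k F x :=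
  integral_add_left_eq_self (fun s => rankOne F (x, s)) t

end Cube

theorem low_rank_approximation_general
    {A : Type*} [AddCommGroup A] [TopologicalSpace A] [IsTopologicalAddGroup A]
    [SecondCountableTopology A]
    [MeasurableSpace A] [BorelSpace A]
    (μ : Measure A) [μ.IsAddHaarMeasure] [IsProbabilityMeasure μ]
    (k : ℕ) (ε : ℝ) (hε : 0 < ε)
    (F : (Fin k → Bool) → A → ℂ)
    (hmeas : ∀ v, Measurable (F v)) (hbd : ∀ v x, ‖F v x‖ ≤ 1) :
    ∃ n : ℕ, 0 < n ∧ (n : ℝ) ≤ 1 + 4 / ε ^ 2 ∧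
      ∃ G : Fin n → (Fin k → Bool) → A → ℂ,
        (∀ i v, Measurable (G i v)) ∧ (∀ i v x, ‖G i v x‖ ≤ 1) ∧
        eLpNorm
          (fun p : A × (Fin k → A) =>
            (1 / n : ℂ) * (∑ i, rankOne (G i) p) - cornerConv μ k F p.1)
          2 (μ.prod (Measure.pi fun _ => μ))
          ≤ ENNReal.ofReal ε := by
  set n := ⌈4 / ε ^ 2⌉₊
  have hn : 0 < n := Nat.ceil_pos.mpr (by positivity)
  have hR : Measurable fun q : (Fin k → A) × A × (Fin k → A) => rankOne F (q.2.1, q.2.2 + q.1) :=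
    (measurable_rankOne hmeas).comp (by fun_prop)
  obtain ⟨s, hs⟩ := exists_eLpNorm_average_sub_integral_le (ν := Measure.pi fun _ => μ)
    (P := μ.prod (Measure.pi fun _ => μ)) (R := fun s p => rankOne F (p.1, p.2 + s))
    hR.stronglyMeasurable (fun _ _ => norm_rankOne_le hbd _) hn.ne'
  refine ⟨n, hn, by linarith [Nat.ceil_lt_add_one (by positivity : 0 ≤ 4 / ε ^ 2)],
    fun i => shiftSystem F (s i), fun i => measurable_shiftSystem hmeas (s i),
    fun _ _ _ => hbd _ _, ?_⟩
  have hrate : 2 * 1 / √n ≤ ε := by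
    have hnε : 4 ≤ n * ε ^ 2 := (div_le_iff₀ (by positivity)).1 (Nat.le_ceil _)
    rw [div_le_iff₀ (by positivity)]
    nlinarith [Real.sq_sqrt (Nat.cast_nonneg (α := ℝ) n), mul_nonneg hε.le (Real.sqrt_nonneg n)]
  refine (le_of_eq ?_).trans (hs.trans (ENNReal.ofReal_le_ofReal hrate))
  congr 1
  ext ⟨x, t⟩
  simp only [rankOne_shiftSystem, integral_rankOne_add, Complex.real_smul, one_div,
    Complex.ofReal_inv, Complex.ofReal_natCast]

/-- Low rank approximation: the lift `[F]∘ψ₀` of a corner convolution to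
`A^{k+1}` is approximable in `L²` with error `ε` by an average of at most `1 + 4/ε²`
rank one functions. -/
theorem low_rank_approximation
    {A : Type*} [AddCommGroup A] [TopologicalSpace A] [IsTopologicalAddGroup A]
    [CompactSpace A] [T2Space A] [SecondCountableTopology A]
    [MeasurableSpace A] [BorelSpace A]
    (μ : Measure A) [μ.IsAddHaarMeasure] [IsProbabilityMeasure μ]
    (k : ℕ) (hk : 1 ≤ k) (ε : ℝ) (hε : 0 < ε)
    (F : (Fin k → Bool) → A → ℂ)
    (hmeas : ∀ v, Measurable (F v)) (hbd : ∀ v x, ‖F v x‖ ≤ 1) :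
    ∃ n : ℕ, 0 < n ∧ (n : ℝ) ≤ 1 + 4 / ε ^ 2 ∧
      ∃ G : Fin n → (Fin k → Bool) → A → ℂ,
        (∀ i v, Measurable (G i v)) ∧ (∀ i v x, ‖G i v x‖ ≤ 1) ∧
        eLpNorm
          (fun p : A × (Fin k → A) =>
            (1 / n : ℂ) * (∑ i, rankOne (G i) p) - cornerConv μ k F p.1)
          2 (μ.prod (Measure.pi fun _ => μ))
          ≤ ENNReal.ofReal ε :=
  low_rank_approximation_general μ k ε hε F hmeas hbd
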